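/- arXiv:2508.14470 — 2 statements merged into one kernel-verified Lean document; each statement's English description precedes it below -/
import Mathlib

section
/- For every tree G = (V, E) with n vertices and every natural number r with r < n, there exists a vertex set V' ⊆ V such that |V'| ≤ 2r and every connected component of G − V' has at most n/r vertices. -/
section Aux

variable {V : Type*} {G : SimpleGraph V}

/-- One adjacency step inside a vertex set `s`. -/
private def TStep (G : SimpleGraph V) (s : Set V) (a b : V) : Prop :=
  a ∈ s ∧ b ∈ s ∧ G.Adj a b

/-- Reachability inside a vertex set `s`. -/
private def TRch (G : SimpleGraph V) (s : Set V) : V → V → Prop :=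
  Relation.ReflTransGen (TStep G s)

/-- The vertex set of the connected component of `u` inside `s`. -/
private def TComp (G : SimpleGraph V) (s : Set V) (u : V) : Set V :=
  {x | TRch G s u x}

private lemma tstep_symm {s : Set V} : Symmetric (TStep G s) := by
  intro a b h; exact ⟨h.2.1, h.1, h.2.2.symm⟩

private lemma trch_symm {s : Set V} {a b : V} (h : TRch G s a b) : TRch G s b a :=
  by
    haveI : Std.Symm (TStep G s) := ⟨fun a b h => tstep_symm h⟩
    exact Std.Symm.symm (r := Relation.ReflTransGen (TStep G s)) _ _ h

private lemma mem_of_trch {s : Set V} {a b : V} (ha : a ∈ s) (h : TRch G s a b) :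
    b ∈ s := by
  rcases Relation.ReflTransGen.cases_tail h with h' | ⟨c, _, hc⟩
  · exact h' ▸ ha
  · exact hc.2.1

private lemma trch_restrict {s d : Set V} {a b : V}
    (hcl : ∀ x ∈ d, ∀ y ∈ s, G.Adj x y → y ∈ d) (ha : a ∈ d)
    (h : TRch G s a b) : TRch G d a b ∧ b ∈ d := by
  induction h with
  | refl => exact ⟨Relation.ReflTransGen.refl, ha⟩
  | tail _ hst ih =>
    have hb : _ ∈ d := hcl _ ih.2 _ hst.2.1 hst.2.2
    exact ⟨ih.1.tail ⟨ih.2, hb, hst.2.2⟩, hb⟩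

private lemma tcomp_subset {s : Set V} {u : V} (hu : u ∈ s) : TComp G s u ⊆ s :=
  fun _ hx => mem_of_trch hu hx

private lemma mem_tcomp_self {s : Set V} (u : V) : u ∈ TComp G s u :=
  Relation.ReflTransGen.refl

private lemma tcomp_closed {s : Set V} {u x y : V} (hu : u ∈ s)
    (hx : x ∈ TComp G s u) (hy : y ∈ s) (hxy : G.Adj x y) : y ∈ TComp G s u :=
  Relation.ReflTransGen.tail hx ⟨mem_of_trch hu hx, hy, hxy⟩

private lemma walk_of_trch {s : Set V} {a b : V} (ha : a ∈ s) (h : TRch G s a b) :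
    ∃ p : G.Walk a b, ∀ z ∈ p.support, z ∈ s := by
  induction h with
  | refl => exact ⟨SimpleGraph.Walk.nil, by simpa using ha⟩
  | tail _ hst ih =>
    obtain ⟨p, hp⟩ := ih
    refine ⟨p.concat hst.2.2, ?_⟩
    intro z hz
    rw [SimpleGraph.Walk.support_concat, List.mem_append] at hz
    rcases hz with hz | hz
    · exact hp z hz
    · simp only [List.mem_singleton] at hz; exact hz ▸ hst.2.1

/-- In an acyclic graph, if `w` is adjacent to both `a` and `b` and there is a walk from
`a` to `b` avoiding `w`, then `a = b`. -/
private lemma acyclic_unique_nbr (hac : G.IsAcyclic) {w a b : V}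
    (hwa : G.Adj w a) (hwb : G.Adj w b) (p : G.Walk a b) (hw : w ∉ p.support) :
    a = b := by
  classical
  by_contra hab
  set q : G.Path a b := p.toPath with hq
  have hwq : w ∉ (q : G.Walk a b).support :=
    fun h => hw (SimpleGraph.Walk.support_toPath_subset p h)
  have hp1 : (SimpleGraph.Walk.cons hwa (q : G.Walk a b)).IsPath :=
    q.2.cons hwq
  have hp2 : (SimpleGraph.Walk.cons hwb SimpleGraph.Walk.nil).IsPath := by
    simp [SimpleGraph.Walk.isPath_def, hwb.ne]
  have := (SimpleGraph.isAcyclic_iff_path_unique.mp hac) ⟨_, hp1⟩ ⟨_, hp2⟩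
  have hsupp := congrArg (fun P : G.Path w b => (P : G.Walk w b).support) this
  simp only [SimpleGraph.Walk.support_cons, SimpleGraph.Walk.support_nil] at hsupp
  have h1 : (q : G.Walk a b).support = [b] := by
    simpa using hsupp
  have h2 := (q : G.Walk a b).start_mem_support
  rw [h1] at h2
  simp only [List.mem_singleton] at h2
  exact hab h2

/-- From the root `w`, every reachable vertex other than `w` is reachable from some
neighbor of `w` while avoiding `w`. -/
private lemma trch_avoid {C : Set V} {w x : V} (h : TRch G C w x) :
    x = w ∨ ∃ y, G.Adj w y ∧ TRch G (C \ {w}) y x := by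
  induction h with
  | refl => exact Or.inl rfl
  | tail _ hst ih =>
    rename_i c x' _
    by_cases hxw : x' = w
    · exact Or.inl hxw
    · right
      have hx' : x' ∈ C \ {w} := ⟨hst.2.1, hxw⟩
      by_cases hcw : c = w
      · subst hcw
        exact ⟨x', hst.2.2, Relation.ReflTransGen.refl⟩
      · rcases ih with h | ⟨y, hy1, hy2⟩
        · exact absurd h hcw
        · exact ⟨y, hy1, hy2.tail ⟨⟨hst.1, hcw⟩, hx', hst.2.2⟩⟩

variable [Fintype V]

/-- Key extraction lemma: from a connected set `C` (rooted at `w`) with more than `t`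
vertices, one can pick a vertex `v` and a set `D` of at least `t` vertices, not containing
the root, that is adjacency-closed in `C \ {v}` and all of whose internal components have
at most `t` vertices. -/
private lemma extract (hac : G.IsAcyclic) :
    ∀ N : ℕ, ∀ C : Set V, C.ncard ≤ N → ∀ t : ℕ, ∀ w ∈ C, (∀ x ∈ C, TRch G C w x) →
    t + 1 ≤ C.ncard →
    ∃ v ∈ C, ∃ D ⊆ C \ {v}, w ∉ D ∧ t ≤ D.ncard ∧
      (∀ a ∈ D, ∀ b ∈ C \ {v}, G.Adj a b → b ∈ D) ∧
      (∀ u ∈ D, (TComp G D u).ncard ≤ t) := by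
  intro N
  induction N with
  | zero => intro C hC t w _ _ ht; omega
  | succ N ih =>
    intro C hC t w hw hconn ht
    set C' : Set V := C \ {w} with hC'
    have hC'sub : C' ⊆ C := Set.diff_subset
    have hC'card : C'.ncard = C.ncard - 1 := Set.ncard_diff_singleton_of_mem hw
    by_cases hA : ∀ u ∈ C', (TComp G C' u).ncard ≤ t
    · refine ⟨w, hw, C', subset_rfl, by simp [hC'], by omega, ?_, hA⟩
      intro a _ b hb _; exact hb
    · push_neg at hA
      obtain ⟨u₁, hu₁, hbig⟩ := hA
      set C₁ : Set V := TComp G C' u₁ with hC₁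
      have hC₁sub : C₁ ⊆ C' := tcomp_subset hu₁
      have hC₁cl : ∀ x ∈ C₁, ∀ y ∈ C', G.Adj x y → y ∈ C₁ :=
        fun x hx y hy hxy => tcomp_closed hu₁ hx hy hxy
      have hwC₁ : w ∉ C₁ := fun h => (hC₁sub h).2 rfl
      -- find the neighbor of w leading into C₁
      have hu₁C : u₁ ∈ C := hC'sub hu₁
      rcases trch_avoid (hconn u₁ hu₁C) with h | ⟨w', hww', hw'u₁⟩
      · exact absurd h hu₁.2
      · rw [← hC'] at hw'u₁
        have hw'C' : w' ∈ C' := mem_of_trch hu₁ (trch_symm hw'u₁)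
        have hw'C₁ : w' ∈ C₁ := trch_symm hw'u₁
        have hconn₁ : ∀ x ∈ C₁, TRch G C₁ w' x := by
          intro x hx
          have h1 : TRch G C₁ u₁ x := (trch_restrict hC₁cl (mem_tcomp_self u₁) hx).1
          have h2 : TRch G C₁ u₁ w' := (trch_restrict hC₁cl (mem_tcomp_self u₁) hw'C₁).1
          exact (trch_symm h2).trans h1
        have hC₁N : C₁.ncard ≤ N := by
          have := Set.ncard_le_ncard hC₁sub (Set.toFinite _)
          omega
        obtain ⟨v, hvC₁, D, hDsub, hw'D, hDcard, hDcl, hDcomp⟩ :=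
          ih C₁ hC₁N t w' hw'C₁ hconn₁ (by omega)
        have hDC₁ : D ⊆ C₁ := hDsub.trans Set.diff_subset
        refine ⟨v, hC'sub (hC₁sub hvC₁), D, ?_, ?_, hDcard, ?_, hDcomp⟩
        · exact fun x hx => ⟨hC'sub (hC₁sub (hDC₁ hx)), (hDsub hx).2⟩
        · exact fun h => (hC₁sub (hDC₁ h)).2 rfl
        · intro a ha b hb hab
          by_cases hbw : b = w
          · subst hbw
            exfalso
            have haC₁ : a ∈ C₁ := hDC₁ ha
            obtain ⟨p, hp⟩ := walk_of_trch hw'C₁ (hconn₁ a haC₁)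
            have hwp : b ∉ p.support := fun h => hwC₁ (hp _ h)
            exact hw'D ((acyclic_unique_nbr hac hww' hab.symm p hwp) ▸ ha)
          · have hbC₁ : b ∈ C₁ := hC₁cl a (hDC₁ ha) b ⟨hb.1, hbw⟩ hab
            exact hDcl a ha b ⟨hbC₁, hb.2⟩ hab

/-- Main lemma: from any vertex set `s` one can remove a set `s'` with
`|s'| * (t+1) ≤ |s|` so that all components of the rest have at most `t` vertices. -/
private lemma key (hac : G.IsAcyclic) (t : ℕ) :
    ∀ N : ℕ, ∀ s : Set V, s.ncard ≤ N →
    ∃ s' ⊆ s, s'.ncard * (t + 1) ≤ s.ncard ∧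
      ∀ u ∈ s \ s', (TComp G (s \ s') u).ncard ≤ t := by
  intro N
  induction N with
  | zero =>
    intro s hs
    by_cases hA : ∀ u ∈ s, (TComp G s u).ncard ≤ t
    · exact ⟨∅, Set.empty_subset _, by simp, by simpa [Set.diff_empty] using hA⟩
    · push_neg at hA
      obtain ⟨u₀, hu₀, hbig⟩ := hA
      have := Set.ncard_le_ncard (tcomp_subset (G := G) (s := s) hu₀) (Set.toFinite s)
      omega
  | succ N ih =>
    intro s hs
    by_cases hA : ∀ u ∈ s, (TComp G s u).ncard ≤ t
    · exact ⟨∅, Set.empty_subset _, by simp, by simpa [Set.diff_empty] using hA⟩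
    · push_neg at hA
      obtain ⟨u₀, hu₀, hbig⟩ := hA
      set C : Set V := TComp G s u₀ with hCdef
      have hCs : C ⊆ s := tcomp_subset hu₀
      have hu₀C : u₀ ∈ C := mem_tcomp_self u₀
      have hCcl : ∀ x ∈ C, ∀ y ∈ s, G.Adj x y → y ∈ C :=
        fun x hx y hy hxy => tcomp_closed hu₀ hx hy hxy
      have hconn : ∀ x ∈ C, TRch G C u₀ x :=
        fun x hx => (trch_restrict hCcl hu₀C hx).1
      obtain ⟨v, hvC, D, hDsub, _, hDcard, hDcl, hDcomp⟩ :=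
        extract hac C.ncard C le_rfl t u₀ hu₀C hconn (by omega)
      have hDC : D ⊆ C := hDsub.trans Set.diff_subset
      have hvD : v ∉ D := fun h => (hDsub h).2 rfl
      set s₂ : Set V := s \ insert v D with hs₂def
      have hins : insert v D ⊆ s := by
        intro x hx
        rcases Set.mem_insert_iff.mp hx with h | h
        · exact h ▸ hCs hvC
        · exact hCs (hDC h)
      have hinscard : (insert v D).ncard = D.ncard + 1 :=
        Set.ncard_insert_of_notMem hvD
      have hs₂card : s₂.ncard = s.ncard - (D.ncard + 1) := by
        rw [hs₂def, Set.ncard_diff hins, hinscard]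
      have hinsle : D.ncard + 1 ≤ s.ncard := by
        rw [← hinscard]; exact Set.ncard_le_ncard hins (Set.toFinite _)
      obtain ⟨s'', hs''sub, hs''card, hs''comp⟩ := ih s₂ (by omega)
      have hvs₂ : v ∉ s₂ := fun h => h.2 (Set.mem_insert _ _)
      have hvs'' : v ∉ s'' := fun h => hvs₂ (hs''sub h)
      have hs''s₂ : s'' ⊆ s₂ := hs''sub
      refine ⟨insert v s'', ?_, ?_, ?_⟩
      · intro x hx
        rcases Set.mem_insert_iff.mp hx with h | h
        · exact h ▸ hCs hvC
        · exact (hs''s₂ h).1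
      · rw [Set.ncard_insert_of_notMem hvs'', Nat.succ_mul]
        have h1 : s''.ncard * (t + 1) + (t + 1) ≤ s₂.ncard + (D.ncard + 1) := by
          have : t + 1 ≤ D.ncard + 1 := by omega
          omega
        omega
      · -- components of the remainder are small
        intro u hu
        have hus : u ∈ s := hu.1
        have hunv : u ≠ v := fun h => hu.2 (h ▸ Set.mem_insert _ _)
        have huns'' : u ∉ s'' := fun h => hu.2 (Set.mem_insert_of_mem _ h)
        -- D is adjacency-closed inside s \ insert v s''
        have hDcl' : ∀ a ∈ D, ∀ b ∈ s \ insert v s'', G.Adj a b → b ∈ D := by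
          intro a ha b hb hab
          have hbC : b ∈ C := hCcl a (hDC ha) b hb.1 hab
          have hbnv : b ≠ v := fun h => hb.2 (h ▸ Set.mem_insert _ _)
          exact hDcl a ha b ⟨hbC, hbnv⟩ hab
        by_cases huD : u ∈ D
        · -- component is inside D
          have hsub : TComp G (s \ insert v s'') u ⊆ TComp G D u := by
            intro x hx
            exact (trch_restrict hDcl' huD hx).1
          exact le_trans (Set.ncard_le_ncard hsub (Set.toFinite _)) (hDcomp u huD)
        · -- component is inside s₂ \ s''
          have hus₂ : u ∈ s₂ := ⟨hus, fun h => by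
            rcases Set.mem_insert_iff.mp h with h | h
            · exact hunv h
            · exact huD h⟩
          have hsub : TComp G (s \ insert v s'') u ⊆ TComp G (s₂ \ s'') u := by
            intro x hx
            have hcl2 : ∀ a ∈ s₂ \ s'', ∀ b ∈ s \ insert v s'', G.Adj a b → b ∈ s₂ \ s'' := by
              intro a ha b hb hab
              have hbns'' : b ∉ s'' := fun h => hb.2 (Set.mem_insert_of_mem _ h)
              have hbnv : b ≠ v := fun h => hb.2 (h ▸ Set.mem_insert _ _)
              have hbnD : b ∉ D := by
                intro hbD
                have haD : a ∈ D := hDcl' b hbD a ⟨ha.1.1, fun h => by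
                  rcases Set.mem_insert_iff.mp h with h | h
                  · exact (fun hh => hh (Set.mem_insert _ _)) (h ▸ ha.1.2)
                  · exact ha.2 h⟩ hab.symm
                exact ha.1.2 (Set.mem_insert_of_mem _ haD)
              exact ⟨⟨hb.1, fun h => by
                rcases Set.mem_insert_iff.mp h with h | h
                · exact hbnv h
                · exact hbnD h⟩, hbns''⟩
            exact (trch_restrict hcl2 ⟨hus₂, huns''⟩ hx).1
          exact le_trans (Set.ncard_le_ncard hsub (Set.toFinite _))
            (hs''comp u ⟨hus₂, huns''⟩)

omit [Fintype V] in
/-- Bridging lemma: reachability in the induced graph equals `TRch`. -/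
private lemma induce_reachable_iff {A : Set V} (a b : ↥A) :
    (G.induce A).Reachable a b ↔ TRch G A ↑a ↑b := by
  constructor
  · rintro ⟨p⟩
    induction p with
    | nil => exact Relation.ReflTransGen.refl
    | cons h _ ih =>
      rename_i x y _ _
      exact Relation.ReflTransGen.head ⟨x.2, y.2, h⟩ ih
  · intro h
    have main : ∀ (x y : V) (_ : TRch G A x y) (hx : x ∈ A) (hy : y ∈ A),
        (G.induce A).Reachable ⟨x, hx⟩ ⟨y, hy⟩ := by
      intro x y h
      induction h with
      | refl => intro hx hy; exact SimpleGraph.Reachable.refl _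
      | tail _ hst ih =>
        intro hx hy
        have hmid := hst.1
        have hadj : (G.induce A).Adj ⟨_, hmid⟩ ⟨_, hy⟩ := hst.2.2
        exact (ih hx hmid).trans hadj.reachable
    exact main ↑a ↑b h a.2 b.2

end Aux

/-- placeholder to keep structure while iterating -/
theorem tree_separator_set {V : Type*} [Fintype V] (G : SimpleGraph V)
    (n : ℕ) (hn : n = Fintype.card V) (htree : G.IsTree)
    (r : ℕ) (hr : 0 < r) (hrn : r < n) :
    ∃ V' : Set V, Nat.card V' ≤ 2 * r ∧
      ∀ c : (G.induce V'ᶜ).ConnectedComponent,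
        (Nat.card {u : ↥V'ᶜ | (G.induce V'ᶜ).connectedComponentMk u = c} : ℚ)
          ≤ (n : ℚ) / r := by
  classical
  set t : ℕ := n / r with htdef
  have hac : G.IsAcyclic := htree.IsAcyclic
  obtain ⟨s', hs'sub, hs'card, hs'comp⟩ :=
    key hac t (Fintype.card V) Set.univ (by rw [Set.ncard_univ, Nat.card_eq_fintype_card])
  have huniv : (Set.univ : Set V).ncard = n := by
    rw [Set.ncard_univ, Nat.card_eq_fintype_card, hn]
  rw [huniv] at hs'card
  -- the cardinality bound
  have hnr : n < r * (t + 1) := by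
    have h1 : r * t + n % r = n := Nat.div_add_mod n r
    have h2 : n % r < r := Nat.mod_lt _ hr
    calc n = r * t + n % r := h1.symm
      _ < r * t + r := by omega
      _ = r * (t + 1) := by ring
  have hs'r : s'.ncard < r := by
    have : s'.ncard * (t + 1) < r * (t + 1) := lt_of_le_of_lt hs'card hnr
    exact Nat.lt_of_mul_lt_mul_right this
  refine ⟨s', ?_, ?_⟩
  · rw [Nat.card_coe_set_eq]
    omega
  · intro c
    induction c using SimpleGraph.ConnectedComponent.ind with
    | _ u =>
      have hcompl : (s'ᶜ : Set V) = Set.univ \ s' := Set.compl_eq_univ_diff s'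
      have huA : (↑u : V) ∈ Set.univ \ s' := hcompl ▸ u.2
      set T : Set V := TComp G (Set.univ \ s') ↑u with hTdef
      -- construct a bijection between the component and T
      have hR : ∀ a b : V, TRch G (s'ᶜ : Set V) a b ↔ TRch G (Set.univ \ s') a b := by
        rw [hcompl]
        exact fun a b => Iff.rfl
      set S : Set ↥(s'ᶜ) :=
        {x : ↥(s'ᶜ) | (G.induce s'ᶜ).connectedComponentMk x
          = (G.induce s'ᶜ).connectedComponentMk u} with hSdef
      have hbij : Nat.card S = Nat.card T := by
        refine Nat.card_eq_of_bijective (fun x => ⟨↑↑x, ?_⟩) ⟨?_, ?_⟩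
        · have hreach : (G.induce s'ᶜ).Reachable ↑x u :=
            (SimpleGraph.ConnectedComponent.eq).mp x.2
          have := (induce_reachable_iff (G := G) (x : ↥(s'ᶜ)) u).mp hreach
          exact trch_symm ((hR _ _).mp this)
        · intro x y hxy
          have h1 : (↑↑x : V) = ↑↑y := congrArg (fun z : ↥T => (z : V)) hxy
          exact Subtype.ext (Subtype.ext h1)
        · rintro ⟨y, hy⟩
          have hyA : y ∈ Set.univ \ s' := mem_of_trch huA hy
          have hyc : y ∈ (s'ᶜ : Set V) := hcompl ▸ hyA
          have hreach : TRch G (s'ᶜ : Set V) y ↑u := (hR _ _).mpr (trch_symm hy)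
          have : (G.induce s'ᶜ).Reachable ⟨y, hyc⟩ u :=
            (induce_reachable_iff (G := G) ⟨y, hyc⟩ u).mpr hreach
          exact ⟨⟨⟨y, hyc⟩, (SimpleGraph.ConnectedComponent.eq).mpr this⟩, rfl⟩
      have hT : T.ncard ≤ t := hs'comp ↑u huA
      have hcard : Nat.card S ≤ t := by
        rw [hbij, Nat.card_coe_set_eq]
        exact hT
      calc (Nat.card S : ℚ) ≤ (t : ℚ) := Nat.cast_le.mpr hcard
        _ ≤ (n : ℚ) / r := Nat.cast_div_le
end

section
/- For even k with 4 ≤ k ≤ n/2, we have k·C(n − k/2 + 1, k/2 + 1) ≤ 4·C(n, k). -/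
namespace Nat

theorem mul_choose_le_choose_add_succ (a r : ℕ) :
    ∀ t, t * choose a r ≤ choose (a + t) (r + 1)
  | 0 => by simp
  | t + 1 => by
    calc (t + 1) * choose a r = t * choose a r + choose a r := by ring
      _ ≤ choose (a + t) (r + 1) + choose (a + t) r :=
        add_le_add (mul_choose_le_choose_add_succ a r t) (choose_le_add a t r)
      _ = choose (a + (t + 1)) (r + 1) := by rw [← add_assoc, choose_succ_succ', add_comm]

theorem choose_le_choose_of_le_half {n a b : ℕ} (hab : a ≤ b) (hb : b ≤ n / 2) :
    choose n a ≤ choose n b := by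
  induction b, hab using le_induction with
  | base => rfl
  | succ b _ ih => exact (ih (by omega)).trans (choose_le_succ_of_lt_half_left (by omega))

end Nat

/-- For even `k` with `4 ≤ k` and `k ≤ n/2`,
`k·C(n-k/2+1, k/2+1) ≤ 4·C(n,k)`. -/
theorem binom_bound (n k : ℕ) (hk : Even k) (h4 : 4 ≤ k) (hkn : 2 * k ≤ n) :
    k * Nat.choose (n - k / 2 + 1) (k / 2 + 1) ≤ 4 * Nat.choose n k := by
  obtain ⟨m, rfl⟩ := hk
  rw [show (m + m) / 2 = m by omega]
  -- `t = ⌈k/4⌉`: large enough that `k ≤ 4t`, small enough that the top index stays `≤ n`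
  set t := (m + 1) / 2
  calc (m + m) * Nat.choose (n - m + 1) (m + 1)
      ≤ 4 * (t * Nat.choose (n - m + 1) (m + 1)) := by rw [← mul_assoc]; gcongr; omega
    _ ≤ 4 * Nat.choose (n - m + 1 + t) (m + 2) := by
        gcongr; exact Nat.mul_choose_le_choose_add_succ _ _ t
    _ ≤ 4 * Nat.choose n (m + 2) := by gcongr; omega
    _ ≤ 4 * Nat.choose n (m + m) := by
        gcongr; exact Nat.choose_le_choose_of_le_half (by omega) (by omega)
end
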